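/- (Cooper pair condensate density as derivative of the pressure.) Suppose that at the given parameter values the variational functional F has a unique maximizer r_β over [0,∞). Then the map γ ↦ p(γ), obtained by letting the BCS coupling γ_s = γ vary with all other parameters held fixed, is differentiable at γ = γ_s, and its derivative there equals r_β. -/

import Mathlib

/-!
Substituting `t = γ_s² r` and `u = γ_s⁻¹` turns `F(r)` into `φ t − t u`, where `φ = β⁻¹ ln f` at
unit coupling (`logFF`) no longer depends on `γ_s`. Hence `p(γ_s) = const + H(γ_s⁻¹)` with
`H u = sup_{t ≥ 0} (φ t − t u)`, a supremum of affine functions of `u`. Since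
`f(t) ≤ f(0) e^{β√t}`, `φ` grows sublinearly, so for `u` near `u₀ = γ_s⁻¹` the maximizers `t(u)`
exist and stay in a fixed compact interval; by uniqueness of the maximizer `t_β = γ_s² r_β` at `u₀`
they converge to `t_β`. Testing each supremum with the other's maximizer squeezes
`H u − H u₀` between `−t_β (u − u₀)` and `−t(u) (u − u₀)`, so `H'(u₀) = −t_β`, and the chain rule
gives `p'(γ_s) = t_β / γ_s² = r_β`.
-/

open Real Filter

/-- `g_{r,x} := sqrt((x + λ_s − μ_s)² + γ_s²·r)`. -/
noncomputable def gg (gams lams mus r x : ℝ) : ℝ :=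
  Real.sqrt ((x + lams - mus) ^ 2 + gams ^ 2 * r)

/-- The function `f` from Theorem 1 of the paper. Parameters:
`beta` = β, `gams` = γ_s, `lams` = λ_s, `lamf` = λ_f, `lam` = λ,
`mus` = μ_s, `muf` = μ_f, `hs` = h_s, `hf` = h_f, `eta` = η. -/
noncomputable def ff (beta gams lams lamf lam mus muf hs hf eta r : ℝ) : ℝ :=
  (Real.exp (-(beta * muf)) + Real.exp (-(beta * (4 * lam + 2 * lamf - muf))))
      * Real.cosh (beta * hs)
    + Real.exp (-(beta * (2 * lam - hs))) * Real.cosh (beta * (eta + hf))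
    + Real.exp (-(beta * (2 * lam + hs))) * Real.cosh (beta * (eta - hf))
    + Real.exp (-(beta * (lams + muf))) * Real.cosh (beta * gg gams lams mus r 0)
    + Real.exp (-(beta * (4 * lam + lams + 2 * lamf - muf)))
      * Real.cosh (beta * gg gams lams mus r (4 * lam))
    + 2 * Real.exp (-(beta * (2 * lam + lams))) * Real.cosh (beta * hf)
      * Real.cosh (beta * gg gams lams mus r (2 * lam))

/-- The variational functional `F(r) := −γ_s·r + β⁻¹·ln f(r)`. -/
noncomputable def FF (beta gams lams lamf lam mus muf hs hf eta r : ℝ) : ℝ :=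
  -(gams * r) + beta⁻¹ * Real.log (ff beta gams lams lamf lam mus muf hs hf eta r)

/-- The grand-canonical pressure `p = β⁻¹ ln 2 + μ_s + μ_f + sup_{r ≥ 0} F(r)`. -/
noncomputable def pp (beta gams lams lamf lam mus muf hs hf eta : ℝ) : ℝ :=
  beta⁻¹ * Real.log 2 + mus + muf +
    sSup ((fun r => FF beta gams lams lamf lam mus muf hs hf eta r) '' Set.Ici 0)

open Set Topology Asymptotics

theorem hasDerivAt_of_squeeze {f g : ℝ → ℝ} {x a : ℝ}
    (hlow : ∀ᶠ y in 𝓝 x, f x + a * (y - x) ≤ f y)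
    (hupp : ∀ᶠ y in 𝓝 x, f y ≤ f x + g y * (y - x))
    (hg : Tendsto g (𝓝 x) (𝓝 a)) : HasDerivAt f a x := by
  rw [hasDerivAt_iff_isLittleO]
  have hsmall : (fun y => (g y - a) * (y - x)) =o[𝓝 x] fun y => y - x := by
    simpa using ((isLittleO_one_iff ℝ).2 (tendsto_sub_nhds_zero_iff.2 hg)).mul_isBigO
      (isBigO_refl (fun y => y - x) (𝓝 x))
  refine IsBigO.trans_isLittleO (IsBigO.of_bound 1 ?_) hsmall
  filter_upwards [hlow, hupp] with y hy_low hy_upp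
  rw [one_mul, Real.norm_eq_abs, Real.norm_eq_abs, smul_eq_mul,
    abs_of_nonneg (by linarith)]
  exact (by linarith : _ ≤ _).trans (le_abs_self _)

theorem tendsto_of_isMaxOn_of_unique {P X α : Type*} [TopologicalSpace P] [TopologicalSpace X]
    [LinearOrder α] [TopologicalSpace α] [OrderClosedTopology α]
    {ψ : P → X → α} {s K : Set X} {T : P → X} {p₀ : P} {x₀ : X}
    (hψ : Continuous ↿ψ) (hK : IsCompact K) (hKs : K ⊆ s)
    (hT : ∀ᶠ p in 𝓝 p₀, T p ∈ K ∧ IsMaxOn (ψ p) s (T p))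
    (huniq : ∀ x ∈ s, IsMaxOn (ψ p₀) s x → x = x₀) : Tendsto T (𝓝 p₀) (𝓝 x₀) := by
  refine hK.tendsto_nhds_of_unique_mapClusterPt (hT.mono fun _ h => h.1) fun x hxK hx => ?_
  refine huniq x (hKs hxK) fun t ht => not_lt.1 fun hlt => ?_
  have hopen : {q : P × X | ψ q.1 q.2 < ψ q.1 t} ∈ 𝓝 (p₀, x) :=
    (isOpen_lt hψ (hψ.comp (continuous_fst.prodMk continuous_const))).mem_nhds hlt
  obtain ⟨U, hU, V, hV, hUV⟩ := mem_nhds_prod_iff.1 hopen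
  obtain ⟨p, hpV, ⟨-, hp_max⟩, hpU⟩ :=
    ((mapClusterPt_iff_frequently.1 hx V hV).and_eventually (hT.and hU)).exists
  exact (hUV (mk_mem_prod hpU hpV)).not_ge (hp_max ht)

theorem exists_mem_Icc_isMaxOn_Ici {β α : Type*} [ConditionallyCompleteLinearOrder β]
    [TopologicalSpace β] [OrderTopology β] [LinearOrder α] [TopologicalSpace α]
    [OrderClosedTopology α] {f : β → α} {a M : β} (hf : ContinuousOn f (Ici a))
    (hM : ∀ t, M ≤ t → f t < f a) : ∃ x ∈ Icc a M, IsMaxOn f (Ici a) x := by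
  have haM : a ≤ M := le_of_not_ge fun h => (hM a h).false
  obtain ⟨x, hx, hx_max⟩ :=
    isCompact_Icc.exists_isMaxOn (nonempty_Icc.2 haM) (hf.mono Icc_subset_Ici_self)
  refine ⟨x, hx, fun t (ht : a ≤ t) => ?_⟩
  rcases le_total t M with htM | hMt
  · exact hx_max ⟨ht, htM⟩
  · exact (hM t hMt).le.trans (hx_max (left_mem_Icc.2 haM))

theorem IsMaxOn.csSup_image_eq {β α : Type*} [ConditionallyCompleteLattice α]
    {f : β → α} {s : Set β} {x : β} (h : IsMaxOn f s x) (hx : x ∈ s) :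
    sSup (f '' s) = f x :=
  IsGreatest.csSup_eq ⟨mem_image_of_mem f hx, forall_mem_image.2 fun _ hy => h hy⟩

theorem isMaxOn_comp_iff_of_image_eq {α β γ : Type*} [Preorder α] {f : β → α} {g : γ → β}
    {s : Set γ} {t : Set β} (h : g '' s = t) {a : γ} :
    IsMaxOn (f ∘ g) s a ↔ IsMaxOn f t (g a) := by
  refine ⟨fun hf => ?_, fun hf => hf.comp_mapsTo (h ▸ mapsTo_image g s) rfl⟩
  rw [← h]
  exact forall_mem_image.2 fun _ hx => hf hx

theorem eventually_sub_mul_lt_of_le_add_sqrt {φ : ℝ → ℝ} (hφ : ∀ t, 0 ≤ t → φ t ≤ φ 0 + √t)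
    {u : ℝ} (hu : 0 < u) : ∀ᶠ t in atTop, φ t - t * u < φ 0 := by
  filter_upwards [eventually_gt_atTop (u⁻¹ ^ 2)] with t ht
  have ht0 : 0 ≤ t := (sq_nonneg _).trans ht.le
  have hsqrt : u⁻¹ < √t := Real.lt_sqrt (by positivity) |>.2 ht
  have hsqrt_lt : √t < t * u := by
    have := (inv_lt_iff_one_lt_mul₀' hu).1 hsqrt
    nlinarith [Real.mul_self_sqrt ht0, Real.sqrt_nonneg t]
  linarith [hφ t ht0]

theorem hasDerivAt_sSup_image_sub_mul {φ : ℝ → ℝ} {u₀ tβ : ℝ} (hφ : Continuous φ)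
    (hφ_tail : ∀ u, 0 < u → ∀ᶠ t in atTop, φ t - t * u < φ 0) (hu₀ : 0 < u₀) (htβ : 0 ≤ tβ)
    (hmax : IsMaxOn (fun t => φ t - t * u₀) (Ici 0) tβ)
    (huniq : ∀ t ∈ Ici 0, IsMaxOn (fun t' => φ t' - t' * u₀) (Ici 0) t → t = tβ) :
    HasDerivAt (fun u => sSup ((fun t => φ t - t * u) '' Ici 0)) (-tβ) u₀ := by
  obtain ⟨M, hM⟩ := eventually_atTop.1 (hφ_tail (u₀ / 2) (by positivity))
  have hM0 : 0 < M := lt_of_not_ge fun h => by simpa using hM 0 h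
  have hexists : ∀ u, u₀ / 2 < u → ∃ t ∈ Icc 0 M, IsMaxOn (fun t => φ t - t * u) (Ici 0) t := by
    intro u hu
    refine exists_mem_Icc_isMaxOn_Ici (by fun_prop) fun t ht => ?_
    nlinarith [hM t ht]
  choose! T hT_mem hT_max using hexists
  have hnear : ∀ᶠ u in 𝓝 u₀, u₀ / 2 < u := eventually_gt_nhds (by linarith)
  have hT : Tendsto T (𝓝 u₀) (𝓝 tβ) :=
    tendsto_of_isMaxOn_of_unique (ψ := fun u t => φ t - t * u) (by fun_prop) isCompact_Icc
      Icc_subset_Ici_self (hnear.mono fun u hu => ⟨hT_mem u hu, hT_max u hu⟩) huniq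
  refine hasDerivAt_of_squeeze (g := fun u => -T u) ?_ ?_ hT.neg
  all_goals
    filter_upwards [hnear] with u hu
    rw [(hT_max u hu).csSup_image_eq (hT_mem u hu).1, hmax.csSup_image_eq htβ]
  · linarith [isMaxOn_iff.1 (hT_max u hu) tβ htβ]
  · linarith [isMaxOn_iff.1 hmax (T u) (hT_mem u hu).1]

theorem cosh_add_le_cosh_mul_exp (x : ℝ) {y : ℝ} (hy : 0 ≤ y) :
    cosh (x + y) ≤ cosh x * exp y := by
  have h : exp (-(x + y)) ≤ exp (-x) * exp y := by
    rw [← exp_add]; exact exp_le_exp.2 (by linarith)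
  rw [cosh_eq, cosh_eq, exp_add]
  nlinarith [exp_pos x, exp_pos y]

theorem cosh_mul_sqrt_add_le {a t b : ℝ} (ha : 0 ≤ a) (ht : 0 ≤ t) (hb : 0 ≤ b) :
    cosh (b * √(a + t)) ≤ cosh (b * √a) * exp (b * √t) := by
  have hsqrt : √(a + t) ≤ √a + √t := by
    rw [Real.sqrt_le_iff]
    refine ⟨by positivity, ?_⟩
    nlinarith [Real.sq_sqrt ha, Real.sq_sqrt ht, Real.sqrt_nonneg a, Real.sqrt_nonneg t]
  calc cosh (b * √(a + t)) ≤ cosh (b * √a + b * √t) := by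
        rw [cosh_le_cosh, abs_of_nonneg (by positivity), abs_of_nonneg (by positivity)]
        nlinarith
    _ ≤ cosh (b * √a) * exp (b * √t) := cosh_add_le_cosh_mul_exp _ (by positivity)

section Pressure

variable (beta lams lamf lam mus muf hs hf eta : ℝ)

theorem ff_pos (gams r : ℝ) : 0 < ff beta gams lams lamf lam mus muf hs hf eta r := by
  unfold ff
  positivity

theorem ff_eq_ff_one (gams r : ℝ) :
    ff beta gams lams lamf lam mus muf hs hf eta r
      = ff beta 1 lams lamf lam mus muf hs hf eta (gams ^ 2 * r) := by
  simp only [ff, gg, one_pow, one_mul]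

theorem ff_one_le_mul_exp_sqrt {t : ℝ} (hbeta : 0 ≤ beta) (ht : 0 ≤ t) :
    ff beta 1 lams lamf lam mus muf hs hf eta t
      ≤ ff beta 1 lams lamf lam mus muf hs hf eta 0 * exp (beta * √t) := by
  have hE : 1 ≤ exp (beta * √t) := one_le_exp (by positivity)
  have hcosh (x : ℝ) : cosh (beta * gg 1 lams mus t x)
      ≤ cosh (beta * gg 1 lams mus 0 x) * exp (beta * √t) := by
    simpa [gg] using cosh_mul_sqrt_add_le (sq_nonneg (x + lams - mus)) ht hbeta
  have hconst {c : ℝ} (hc : 0 ≤ c) : c ≤ c * exp (beta * √t) := le_mul_of_one_le_right hc hE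
  unfold ff
  linarith [hconst (c := (exp (-(beta * muf)) + exp (-(beta * (4 * lam + 2 * lamf - muf))))
      * cosh (beta * hs)) (by positivity),
    hconst (c := exp (-(beta * (2 * lam - hs))) * cosh (beta * (eta + hf))) (by positivity),
    hconst (c := exp (-(beta * (2 * lam + hs))) * cosh (beta * (eta - hf))) (by positivity),
    mul_le_mul_of_nonneg_left (hcosh 0) (exp_pos (-(beta * (lams + muf)))).le,
    mul_le_mul_of_nonneg_left (hcosh (4 * lam))
      (exp_pos (-(beta * (4 * lam + lams + 2 * lamf - muf)))).le,
    mul_le_mul_of_nonneg_left (hcosh (2 * lam))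
      (by positivity : 0 ≤ 2 * exp (-(beta * (2 * lam + lams))) * cosh (beta * hf))]

noncomputable def logFF (t : ℝ) : ℝ :=
  beta⁻¹ * Real.log (ff beta 1 lams lamf lam mus muf hs hf eta t)

theorem continuous_logFF : Continuous (logFF beta lams lamf lam mus muf hs hf eta) := by
  refine continuous_const.mul (Continuous.log ?_ fun t => (ff_pos ..).ne')
  unfold ff gg
  fun_prop

theorem logFF_le_add_sqrt {t : ℝ} (hbeta : 0 < beta) (ht : 0 ≤ t) :
    logFF beta lams lamf lam mus muf hs hf eta t
      ≤ logFF beta lams lamf lam mus muf hs hf eta 0 + √t := by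
  have hlog := Real.log_le_log (ff_pos ..)
    (ff_one_le_mul_exp_sqrt beta lams lamf lam mus muf hs hf eta hbeta.le ht)
  rw [Real.log_mul (ff_pos ..).ne' (exp_pos _).ne', Real.log_exp] at hlog
  unfold logFF
  calc beta⁻¹ * Real.log (ff beta 1 lams lamf lam mus muf hs hf eta t)
      ≤ beta⁻¹ * (Real.log (ff beta 1 lams lamf lam mus muf hs hf eta 0) + beta * √t) := by gcongr
    _ = _ := by field_simp

theorem FF_eq_logFF (gams : ℝ) :
    FF beta gams lams lamf lam mus muf hs hf eta
      = (fun t => logFF beta lams lamf lam mus muf hs hf eta t - t * gams⁻¹) ∘ (gams ^ 2 * ·) := by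
  ext r
  simp only [FF, logFF, ff_eq_ff_one beta lams lamf lam mus muf hs hf eta gams, Function.comp]
  field_simp
  ring

theorem image_sq_mul_Ici {gams : ℝ} (hgams : gams ≠ 0) : (gams ^ 2 * ·) '' Ici 0 = Ici 0 := by
  rw [image_mul_left_Ici (by positivity), mul_zero]

theorem isMaxOn_FF_iff {gams r : ℝ} (hgams : gams ≠ 0) :
    IsMaxOn (FF beta gams lams lamf lam mus muf hs hf eta) (Ici 0) r ↔
      IsMaxOn (fun t => logFF beta lams lamf lam mus muf hs hf eta t - t * gams⁻¹) (Ici 0)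
        (gams ^ 2 * r) := by
  rw [FF_eq_logFF]
  exact isMaxOn_comp_iff_of_image_eq (image_sq_mul_Ici hgams)

theorem pp_eq_sSup_logFF {gams : ℝ} (hgams : gams ≠ 0) :
    pp beta gams lams lamf lam mus muf hs hf eta = beta⁻¹ * Real.log 2 + mus + muf
      + sSup ((fun t => logFF beta lams lamf lam mus muf hs hf eta t - t * gams⁻¹) '' Ici 0) := by
  rw [pp, FF_eq_logFF, image_comp, image_sq_mul_Ici hgams]

end Pressure

theorem pressure_deriv_bcs_coupling_general (beta gams lams lamf lam mus muf hs hf eta : ℝ) (hbeta : 0 < beta) (hgams : 0 < gams)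
    (rb : ℝ) (hrb : 0 ≤ rb) (hmax : ∀ r' : ℝ, 0 ≤ r' → FF beta gams lams lamf lam mus muf hs hf eta r' ≤ FF beta gams lams lamf lam mus muf hs hf eta rb)
    (huniq : ∀ r : ℝ, 0 ≤ r → (∀ r' : ℝ, 0 ≤ r' → FF beta gams lams lamf lam mus muf hs hf eta r' ≤ FF beta gams lams lamf lam mus muf hs hf eta r) → r = rb) :
    HasDerivAt (fun gam => pp beta gam lams lamf lam mus muf hs hf eta) rb gams := by
  have hmax' := (isMaxOn_FF_iff (hgams := hgams.ne') ..).1 (isMaxOn_iff.2 hmax)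
  have huniq' (t : ℝ) (ht : t ∈ Ici 0) (ht_max : IsMaxOn
      (fun t => logFF beta lams lamf lam mus muf hs hf eta t - t * gams⁻¹) (Ici 0) t) :
      t = gams ^ 2 * rb := by
    rw [← image_sq_mul_Ici hgams.ne'] at ht
    obtain ⟨r, hr, rfl⟩ := ht
    rw [huniq r hr (isMaxOn_iff.1 ((isMaxOn_FF_iff (hgams := hgams.ne') ..).2 ht_max))]
  have henv := hasDerivAt_sSup_image_sub_mul (continuous_logFF ..)
    (fun u hu => eventually_sub_mul_lt_of_le_add_sqrt
      (fun t ht => logFF_le_add_sqrt (hbeta := hbeta) (ht := ht) ..) hu)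
    (inv_pos.2 hgams) (by positivity) hmax' huniq'
  have hderiv := (henv.comp gams (hasDerivAt_inv hgams.ne')).const_add
    (beta⁻¹ * Real.log 2 + mus + muf)
  rw [show -(gams ^ 2 * rb) * -(gams ^ 2)⁻¹ = rb by field_simp] at hderiv
  refine hderiv.congr_of_eventuallyEq ?_
  filter_upwards [eventually_ne_nhds hgams.ne'] with gam hgam
  exact pp_eq_sSup_logFF (hgams := hgam) ..

/-- Cooper pair condensate density as derivative of the pressure:
if `F` has a unique maximizer `rb` over `[0,∞)`, then `γ ↦ p(γ)` is differentiable
at `γ_s` with derivative `rb`. -/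
theorem pressure_deriv_bcs_coupling (beta gams lams lamf lam mus muf hs hf eta : ℝ) (hbeta : 0 < beta) (hgams : 0 < gams) (hlams : 0 ≤ lams) (hlamf : 0 ≤ lamf) (hlam : 0 ≤ lam)
    (rb : ℝ) (hrb : 0 ≤ rb) (hmax : ∀ r' : ℝ, 0 ≤ r' → FF beta gams lams lamf lam mus muf hs hf eta r' ≤ FF beta gams lams lamf lam mus muf hs hf eta rb)
    (huniq : ∀ r : ℝ, 0 ≤ r → (∀ r' : ℝ, 0 ≤ r' → FF beta gams lams lamf lam mus muf hs hf eta r' ≤ FF beta gams lams lamf lam mus muf hs hf eta r) → r = rb) :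
    HasDerivAt (fun gam => pp beta gam lams lamf lam mus muf hs hf eta) rb gams :=
  pressure_deriv_bcs_coupling_general beta gams lams lamf lam mus muf hs hf eta hbeta hgams rb hrb
    hmax huniq
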